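/- arXiv:2206.01964 — 2 statements merged into one kernel-verified Lean document; each statement's English description precedes it below -/
import Mathlib

section
/- Let λ ⊢ N and σ = s_{i_1}⋯s_{i_r} ∈ S_N be a product of adjacent transpositions with strictly increasing indices i_1 < i_2 < ⋯ < i_r. Then for any standard Young tableau T of shape λ, the matrix element of the Young orthogonal representation satisfies |(R_λ(σ)v_T, v_T)| = Π_j 1/|a_{i_j+1} − a_{i_j}|, where the product runs over those j for which i_j and i_j + 1 lie in different rows and different columns of T, and a_i denotes the content (column index minus row index) of the box of T containing i. -/
open scoped RealInnerProductSpace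

noncomputable def Dcoef {T : Type} (Row Col : T → ℕ → ℕ) (ct : T → ℕ → ℝ) (u : T) (k : ℕ) : ℝ :=
  if Row u k = Row u (k + 1) then 1
  else if Col u k = Col u (k + 1) then -1
  else 1 / (ct u (k + 1) - ct u k)

noncomputable def Scoef {T : Type} (Row Col : T → ℕ → ℕ) (ct : T → ℕ → ℝ) (u : T) (k : ℕ) : ℝ :=
  if Row u k ≠ Row u (k + 1) ∧ Col u k ≠ Col u (k + 1)
  then Real.sqrt (1 - 1 / (ct u (k + 1) - ct u k) ^ 2) else 0

lemma key_inner {N : ℕ} {T : Type} [Fintype T] [DecidableEq T]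
    (Row Col : T → ℕ → ℕ) (swapT : T → ℕ → T)
    (ct : T → ℕ → ℝ) (hct : ∀ t i, ct t i = (Col t i : ℝ) - (Row t i : ℝ))
    (v : T → EuclideanSpace ℝ T) (hv : Orthonormal ℝ v)
    (ρ : Equiv.Perm (Fin N) →* Module.End ℝ (EuclideanSpace ℝ T))
    (hrow : ∀ (t : T) (i : ℕ) (hi : i + 1 < N), Row t i = Row t (i + 1) →
      ρ (Equiv.swap (⟨i, Nat.lt_of_succ_lt hi⟩ : Fin N) ⟨i + 1, hi⟩) (v t) = v t)
    (hcol : ∀ (t : T) (i : ℕ) (hi : i + 1 < N), Col t i = Col t (i + 1) →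
      ρ (Equiv.swap (⟨i, Nat.lt_of_succ_lt hi⟩ : Fin N) ⟨i + 1, hi⟩) (v t) = -v t)
    (hmix : ∀ (t : T) (i : ℕ) (hi : i + 1 < N),
      Row t i ≠ Row t (i + 1) → Col t i ≠ Col t (i + 1) →
      ρ (Equiv.swap (⟨i, Nat.lt_of_succ_lt hi⟩ : Fin N) ⟨i + 1, hi⟩) (v t)
        = (1 / (ct t (i + 1) - ct t i)) • v t
          + Real.sqrt (1 - 1 / (ct t (i + 1) - ct t i) ^ 2) • v (swapT t i))
    (hswap : ∀ (t : T) (i : ℕ), Row t i ≠ Row t (i + 1) → Col t i ≠ Col t (i + 1) →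
      Row (swapT t i) i = Row t (i + 1) ∧ Row (swapT t i) (i + 1) = Row t i ∧
      Col (swapT t i) i = Col t (i + 1) ∧ Col (swapT t i) (i + 1) = Col t i ∧
      swapT (swapT t i) i = t ∧
      ∀ j, j ≠ i → j ≠ i + 1 → Row (swapT t i) j = Row t j ∧ Col (swapT t i) j = Col t j)
    (k : ℕ) (hk : k + 1 < N) (u : T) (x : EuclideanSpace ℝ T) :
    (⟪ρ (Equiv.swap (⟨k, Nat.lt_of_succ_lt hk⟩ : Fin N) ⟨k + 1, hk⟩) x, v u⟫ : ℝ)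
      = Dcoef Row Col ct u k * ⟪x, v u⟫ + Scoef Row Col ct u k * ⟪x, v (swapT u k)⟫ := by
  classical
  haveI : Nonempty T := ⟨u⟩
  have hvi : ∀ a b : T, (⟪v a, v b⟫ : ℝ) = if a = b then 1 else 0 :=
    fun a b => orthonormal_iff_ite.mp hv a b
  set s : Equiv.Perm (Fin N) := Equiv.swap (⟨k, Nat.lt_of_succ_lt hk⟩ : Fin N) ⟨k + 1, hk⟩ with hs
  have hcard : Fintype.card T = Module.finrank ℝ (EuclideanSpace ℝ T) :=
    (finrank_euclideanSpace).symm
  set b := basisOfLinearIndependentOfCardEqFinrank hv.linearIndependent hcard with hbdef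
  have hb : ⇑b = v := coe_basisOfLinearIndependentOfCardEqFinrank _ _
  have hext : (((innerSL ℝ (v u)).toLinearMap).comp (ρ s))
      = Dcoef Row Col ct u k • ((innerSL ℝ (v u)).toLinearMap)
        + Scoef Row Col ct u k • ((innerSL ℝ (v (swapT u k))).toLinearMap) := by
    apply b.ext
    intro w
    have hbw : b w = v w := by rw [hb]
    rw [hbw]
    simp only [LinearMap.comp_apply, LinearMap.add_apply, LinearMap.smul_apply,
      ContinuousLinearMap.coe_coe, innerSL_apply_apply, smul_eq_mul]
    by_cases h1 : Row w k = Row w (k + 1)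
    · rw [hrow w k hk h1]
      by_cases h2 : u = w
      · subst h2
        simp [Dcoef, Scoef, h1, hvi]
      · simp only [hvi, if_neg h2]
        by_cases h3 : swapT u k = w
        · by_cases h4 : Row u k ≠ Row u (k + 1) ∧ Col u k ≠ Col u (k + 1)
          · exfalso
            obtain ⟨r1, r2, c1, c2, hss, hother⟩ := hswap u k h4.1 h4.2
            rw [h3] at r1 r2
            exact h4.1 (r2.symm.trans (h1.symm.trans r1))
          · simp [Scoef, h4]
        · rw [if_neg h3]; ring
    · by_cases h2 : Col w k = Col w (k + 1)
      · rw [hcol w k hk h2, inner_neg_right]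
        by_cases h3 : u = w
        · subst h3
          simp [Dcoef, Scoef, h1, h2, hvi]
        · simp only [hvi, if_neg h3]
          by_cases h4 : swapT u k = w
          · by_cases h5 : Row u k ≠ Row u (k + 1) ∧ Col u k ≠ Col u (k + 1)
            · exfalso
              obtain ⟨r1, r2, c1, c2, hss, hother⟩ := hswap u k h5.1 h5.2
              rw [h4] at c1 c2
              exact h5.2 (c2.symm.trans (h2.symm.trans c1))
            · simp [Scoef, h5]
          · rw [if_neg h4]; ring
      · -- w mixed
        rw [hmix w k hk h1 h2, inner_add_right, real_inner_smul_right, real_inner_smul_right]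
        obtain ⟨r1, r2, c1, c2, hss, hother⟩ := hswap w k h1 h2
        have hwne : swapT w k ≠ w := fun h => h1 (by rw [h] at r1; exact r1)
        have hwne' : w ≠ swapT w k := fun h => hwne h.symm
        have hm1 : Row (swapT w k) k ≠ Row (swapT w k) (k + 1) := by
          rw [r1, r2]; exact fun h => h1 h.symm
        have hm2 : Col (swapT w k) k ≠ Col (swapT w k) (k + 1) := by
          rw [c1, c2]; exact fun h => h2 h.symm
        have hctr : ct (swapT w k) (k + 1) - ct (swapT w k) k = -(ct w (k + 1) - ct w k) := by
          rw [hct, hct, hct, hct, r1, r2, c1, c2]; ring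
        have hSval : Scoef Row Col ct (swapT w k) k
            = Real.sqrt (1 - 1 / (ct w (k + 1) - ct w k) ^ 2) := by
          have h0 : Scoef Row Col ct (swapT w k) k
              = Real.sqrt (1 - 1 / (ct (swapT w k) (k + 1) - ct (swapT w k) k) ^ 2) :=
            if_pos ⟨hm1, hm2⟩
          rw [h0, hctr, show (-(ct w (k + 1) - ct w k)) ^ 2 = (ct w (k + 1) - ct w k) ^ 2 by ring]
        by_cases h3 : u = w
        · subst h3
          simp [hvi, hwne, hwne', Dcoef, h1, h2]
        · by_cases h4 : u = swapT w k
          · subst h4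
            simp [hvi, hwne, hwne', hss, hSval, hv.1]
          · simp only [hvi, if_neg h3, if_neg h4]
            by_cases h6 : Row u k ≠ Row u (k + 1) ∧ Col u k ≠ Col u (k + 1)
            · have h5 : swapT u k ≠ w := by
                intro h
                apply h4
                obtain ⟨_, _, _, _, hss2, _⟩ := hswap u k h6.1 h6.2
                rw [← hss2, h]
              rw [if_neg h5]; ring
            · simp [Scoef, h6]
  have := LinearMap.congr_fun hext x
  simp only [LinearMap.comp_apply, LinearMap.add_apply, LinearMap.smul_apply,
    ContinuousLinearMap.coe_coe, innerSL_apply_apply, smul_eq_mul] at this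
  rw [real_inner_comm ((ρ s) x) (v u), real_inner_comm x (v u),
    real_inner_comm x (v (swapT u k))] at this
  exact this

noncomputable def word {N : ℕ} (l : List ℕ) (hl : ∀ k ∈ l, k + 1 < N) : Equiv.Perm (Fin N) :=
  (l.pmap (fun k (hk : k + 1 < N) =>
    Equiv.swap (⟨k, Nat.lt_of_succ_lt hk⟩ : Fin N) ⟨k + 1, hk⟩) hl).prod

lemma word_cons {N : ℕ} (k : ℕ) (l : List ℕ) (hl : ∀ m ∈ k :: l, m + 1 < N)
    (hk : k + 1 < N) (hl' : ∀ m ∈ l, m + 1 < N) :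
    word (k :: l) hl
      = Equiv.swap (⟨k, Nat.lt_of_succ_lt hk⟩ : Fin N) ⟨k + 1, hk⟩ * word l hl' := by
  simp [word, List.pmap]

lemma main_ind {N : ℕ} {T : Type} [Fintype T] [DecidableEq T]
    (Row Col : T → ℕ → ℕ) (swapT : T → ℕ → T)
    (ct : T → ℕ → ℝ) (hct : ∀ t i, ct t i = (Col t i : ℝ) - (Row t i : ℝ))
    (v : T → EuclideanSpace ℝ T) (hv : Orthonormal ℝ v)
    (ρ : Equiv.Perm (Fin N) →* Module.End ℝ (EuclideanSpace ℝ T))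
    (hrow : ∀ (t : T) (i : ℕ) (hi : i + 1 < N), Row t i = Row t (i + 1) →
      ρ (Equiv.swap (⟨i, Nat.lt_of_succ_lt hi⟩ : Fin N) ⟨i + 1, hi⟩) (v t) = v t)
    (hcol : ∀ (t : T) (i : ℕ) (hi : i + 1 < N), Col t i = Col t (i + 1) →
      ρ (Equiv.swap (⟨i, Nat.lt_of_succ_lt hi⟩ : Fin N) ⟨i + 1, hi⟩) (v t) = -v t)
    (hmix : ∀ (t : T) (i : ℕ) (hi : i + 1 < N),
      Row t i ≠ Row t (i + 1) → Col t i ≠ Col t (i + 1) →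
      ρ (Equiv.swap (⟨i, Nat.lt_of_succ_lt hi⟩ : Fin N) ⟨i + 1, hi⟩) (v t)
        = (1 / (ct t (i + 1) - ct t i)) • v t
          + Real.sqrt (1 - 1 / (ct t (i + 1) - ct t i) ^ 2) • v (swapT t i))
    (hswap : ∀ (t : T) (i : ℕ), Row t i ≠ Row t (i + 1) → Col t i ≠ Col t (i + 1) →
      Row (swapT t i) i = Row t (i + 1) ∧ Row (swapT t i) (i + 1) = Row t i ∧
      Col (swapT t i) i = Col t (i + 1) ∧ Col (swapT t i) (i + 1) = Col t i ∧
      swapT (swapT t i) i = t ∧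
      ∀ j, j ≠ i → j ≠ i + 1 → Row (swapT t i) j = Row t j ∧ Col (swapT t i) j = Col t j) :
    ∀ (l : List ℕ) (hl : ∀ k ∈ l, k + 1 < N), l.Chain' (· < ·) → ∀ (t : T),
      (∀ (u : T) (j : ℕ), (∀ m ∈ l, j < m) →
          (⟪ρ (word l hl) (v t), v u⟫ : ℝ) ≠ 0 → Row u j = Row t j ∧ Col u j = Col t j)
      ∧ (⟪ρ (word l hl) (v t), v t⟫ : ℝ) = (l.map (Dcoef Row Col ct t)).prod := by
  intro l
  have hvi : ∀ a b : T, (⟪v a, v b⟫ : ℝ) = if a = b then 1 else 0 :=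
    fun a b => orthonormal_iff_ite.mp hv a b
  induction l with
  | nil =>
    intro hl _ t
    constructor
    · intro u j _ hne
      simp only [word, List.pmap, List.prod_nil, map_one, Module.End.one_apply] at hne
      rw [hvi] at hne
      by_cases h : t = u
      · subst h; exact ⟨rfl, rfl⟩
      · rw [if_neg h] at hne; exact absurd rfl hne
    · simp [word, List.pmap, hvi, hv.1]
  | cons k l' ih =>
    intro hl hchain t
    have hk : k + 1 < N := hl k (List.mem_cons_self)
    have hl' : ∀ m ∈ l', m + 1 < N := fun m hm => hl m (List.mem_cons_of_mem _ hm)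
    have hpw := List.isChain_iff_pairwise.mp hchain
    have hlt : ∀ m ∈ l', k < m := (List.pairwise_cons.mp hpw).1
    have hchain' : l'.Chain' (· < ·) :=
      List.isChain_iff_pairwise.mpr (List.pairwise_cons.mp hpw).2
    obtain ⟨iha, ihb⟩ := ih hl' hchain' t
    set x := ρ (word l' hl') (v t) with hx
    have happ : ∀ u : T, (⟪ρ (word (k :: l') hl) (v t), v u⟫ : ℝ)
        = Dcoef Row Col ct u k * ⟪x, v u⟫ + Scoef Row Col ct u k * ⟪x, v (swapT u k)⟫ := by
      intro u
      rw [word_cons k l' hl hk hl', map_mul, Module.End.mul_apply]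
      exact key_inner Row Col swapT ct hct v hv ρ hrow hcol hmix hswap k hk u x
    constructor
    · intro u j hj hne
      rw [happ u] at hne
      by_cases hxu : (⟪x, v u⟫ : ℝ) ≠ 0
      · exact iha u j (fun m hm => hj m (List.mem_cons_of_mem _ hm)) hxu
      · push_neg at hxu
        rw [hxu, mul_zero, zero_add] at hne
        have hm : Row u k ≠ Row u (k + 1) ∧ Col u k ≠ Col u (k + 1) := by
          by_contra hc
          have h0 : Scoef Row Col ct u k = 0 := if_neg hc
          rw [h0, zero_mul] at hne
          exact hne rfl
        have hx2 : (⟪x, v (swapT u k)⟫ : ℝ) ≠ 0 := fun h => hne (by rw [h, mul_zero])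
        have hres := iha (swapT u k) j (fun m hm => hj m (List.mem_cons_of_mem _ hm)) hx2
        obtain ⟨_, _, _, _, _, hoth⟩ := hswap u k hm.1 hm.2
        have hjk : j < k := hj k (List.mem_cons_self)
        obtain ⟨hr, hc⟩ := hoth j (by omega) (by omega)
        exact ⟨hr.symm.trans hres.1, hc.symm.trans hres.2⟩
    · rw [happ t]
      have hS0 : Scoef Row Col ct t k * (⟪x, v (swapT t k)⟫ : ℝ) = 0 := by
        by_cases hm : Row t k ≠ Row t (k + 1) ∧ Col t k ≠ Col t (k + 1)
        · have hsw := hswap t k hm.1 hm.2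
          have hx0 : (⟪x, v (swapT t k)⟫ : ℝ) = 0 := by
            by_contra hne
            have hthis := (iha (swapT t k) k hlt hne).1
            rw [hsw.1] at hthis
            exact hm.1 hthis.symm
          rw [hx0, mul_zero]
        · have h0 : Scoef Row Col ct t k = 0 := if_neg hm
          rw [h0, zero_mul]
      rw [hS0, add_zero, ihb, List.map_cons, List.prod_cons]

/-- Matrix-element formula for Young's orthogonal representation `R_λ` of `S_N`.

The representation is encoded abstractly: `T` ranges over an index type of (standard Young)
tableaux, `Row t i` and `Col t i` give the row and column of the entry `i` of the tableau
`t`, `ct t i = Col t i - Row t i` is the content of the box containing `i`, `swapT t i` is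
the tableau obtained from `t` by exchanging the entries `i` and `i+1`, `v` is an orthonormal
family of vectors indexed by tableaux, and `ρ` is a representation of `S_N` acting on the
Coxeter generators by the rules of Young's orthogonal form.  If
`σ = s_{i_1} ⋯ s_{i_r}` with `i_1 < ⋯ < i_r`, then
`|(R_λ(σ) v_t, v_t)| = ∏ 1/|a_{i_j+1} - a_{i_j}|`, the product being over those `j` for
which `i_j` and `i_j + 1` lie in different rows and different columns of `t`. -/
theorem young_orthogonal_matrix_element (N : ℕ) (T : Type) [Fintype T] [DecidableEq T]
    (Row Col : T → ℕ → ℕ) (swapT : T → ℕ → T)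
    (ct : T → ℕ → ℝ) (hct : ∀ t i, ct t i = (Col t i : ℝ) - (Row t i : ℝ))
    (v : T → EuclideanSpace ℝ T) (hv : Orthonormal ℝ v) (hvinj : Function.Injective v)
    (ρ : Equiv.Perm (Fin N) →* Module.End ℝ (EuclideanSpace ℝ T))
    (hrow : ∀ (t : T) (i : ℕ) (hi : i + 1 < N), Row t i = Row t (i + 1) →
      ρ (Equiv.swap (⟨i, Nat.lt_of_succ_lt hi⟩ : Fin N) ⟨i + 1, hi⟩) (v t) = v t)
    (hcol : ∀ (t : T) (i : ℕ) (hi : i + 1 < N), Col t i = Col t (i + 1) →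
      ρ (Equiv.swap (⟨i, Nat.lt_of_succ_lt hi⟩ : Fin N) ⟨i + 1, hi⟩) (v t) = -v t)
    (hmix : ∀ (t : T) (i : ℕ) (hi : i + 1 < N),
      Row t i ≠ Row t (i + 1) → Col t i ≠ Col t (i + 1) →
      ρ (Equiv.swap (⟨i, Nat.lt_of_succ_lt hi⟩ : Fin N) ⟨i + 1, hi⟩) (v t)
        = (1 / (ct t (i + 1) - ct t i)) • v t
          + Real.sqrt (1 - 1 / (ct t (i + 1) - ct t i) ^ 2) • v (swapT t i))
    (hswap : ∀ (t : T) (i : ℕ), Row t i ≠ Row t (i + 1) → Col t i ≠ Col t (i + 1) →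
      Row (swapT t i) i = Row t (i + 1) ∧ Row (swapT t i) (i + 1) = Row t i ∧
      Col (swapT t i) i = Col t (i + 1) ∧ Col (swapT t i) (i + 1) = Col t i ∧
      swapT (swapT t i) i = t ∧
      ∀ j, j ≠ i → j ≠ i + 1 → Row (swapT t i) j = Row t j ∧ Col (swapT t i) j = Col t j)
    (l : List ℕ) (hl : ∀ k ∈ l, k + 1 < N) (hchain : l.Chain' (· < ·))
    (σ : Equiv.Perm (Fin N))
    (hσ : σ = (l.pmap (fun k (hk : k + 1 < N) =>
        Equiv.swap (⟨k, Nat.lt_of_succ_lt hk⟩ : Fin N) ⟨k + 1, hk⟩) hl).prod)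
    (t : T) :
    |(⟪ρ σ (v t), v t⟫ : ℝ)|
      = ∏ i ∈ l.toFinset.filter
          (fun i => Row t i ≠ Row t (i + 1) ∧ Col t i ≠ Col t (i + 1)),
          1 / |ct t (i + 1) - ct t i| := by
  classical
  have hword : σ = word l hl := hσ
  obtain ⟨_, hb⟩ := main_ind Row Col swapT ct hct v hv ρ hrow hcol hmix hswap l hl hchain t
  rw [hword, hb]
  have hnd : l.Nodup :=
    (List.isChain_iff_pairwise.mp hchain).imp (fun h => Nat.ne_of_lt h)
  rw [← List.prod_toFinset _ hnd, Finset.abs_prod, Finset.prod_filter]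
  apply Finset.prod_congr rfl
  intro i _
  by_cases h1 : Row t i = Row t (i + 1)
  · simp [Dcoef, h1]
  · by_cases h2 : Col t i = Col t (i + 1)
    · simp [Dcoef, h1, h2]
    · simp [Dcoef, h1, h2, abs_div, abs_inv]
end

section
/- Let S_n̂ be the inductive limit of S_{N_k} under block-diagonal embeddings, and χ_nat(σ) = 1 − #supp_{N_k}(σ)/N_k for σ ∈ S_{N_k} (well-defined on S_n̂). Then the set of values {χ_nat(σ) : σ ∈ S_n̂} equals {p/q : q ∈ Div(n̂), 0 ≤ p ≤ q, gcd(p,q) = 1}, where Div(n̂) = {N ∈ ℕ : N | N_k for some k}. -/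
/-- `N_k = n_1 ⋯ n_k`. -/
def Nprod (n : ℕ → ℕ) (k : ℕ) : ℕ := ∏ i ∈ Finset.range k, n i

lemma exists_perm_card_support (N m : ℕ) (hm : m ≤ N) (h1 : m ≠ 1) :
    ∃ σ : Equiv.Perm (Fin N), σ.support.card = m := by
  rcases Nat.eq_zero_or_pos m with h0 | hpos
  · exact ⟨1, by simp [h0]⟩
  · obtain ⟨m', rfl⟩ : ∃ m', m = m' + 2 := by
      rcases m with _ | _ | m'
      · omega
      · omega
      · exact ⟨m', rfl⟩
    have e : Fin (m' + 2) ≃ {x : Fin N // x.val < m' + 2} :=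
      { toFun := fun i => ⟨⟨i, lt_of_lt_of_le i.2 hm⟩, i.2⟩
        invFun := fun x => ⟨x.1, x.2⟩
        left_inv := fun i => rfl
        right_inv := fun x => rfl }
    refine ⟨(finRotate (m' + 2)).extendDomain e, ?_⟩
    rw [Equiv.Perm.card_support_extend_domain, support_finRotate]
    simp

lemma frac_reduce (N c : ℕ) (hN : 0 < N) (hc : c ≤ N) :
    1 - (c : ℚ) / N
      = (((N - c) / Nat.gcd (N - c) N : ℕ) : ℚ) / ((N / Nat.gcd (N - c) N : ℕ) : ℚ) := by
  set g := Nat.gcd (N - c) N with hg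
  have hgpos : 0 < g := Nat.gcd_pos_of_pos_right _ hN
  have hq'pos : 0 < N / g := Nat.div_pos (Nat.le_of_dvd hN (Nat.gcd_dvd_right _ _)) hgpos
  have h1 : ((N - c) / g : ℕ) * g = N - c := Nat.div_mul_cancel (Nat.gcd_dvd_left _ _)
  have h2 : ((N / g : ℕ)) * g = N := Nat.div_mul_cancel (Nat.gcd_dvd_right _ _)
  have hNQ : (N : ℚ) ≠ 0 := Nat.cast_ne_zero.mpr hN.ne'
  have h1Q : (((N - c) / g : ℕ) : ℚ) * g = (N : ℚ) - c := by
    rw [← Nat.cast_sub hc]; exact_mod_cast congrArg (Nat.cast : ℕ → ℚ) h1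
  have h2Q : (((N / g : ℕ)) : ℚ) * g = (N : ℚ) := by
    exact_mod_cast congrArg (Nat.cast : ℕ → ℚ) h2
  have hq'Q : (((N / g : ℕ)) : ℚ) ≠ 0 := Nat.cast_ne_zero.mpr hq'pos.ne'
  have key : (((N - c) / g : ℕ) : ℚ) / ((N / g : ℕ) : ℚ) = ((N : ℚ) - c) / N := by
    rw [div_eq_div_iff hq'Q hNQ]
    linear_combination (((N / g : ℕ)) : ℚ) * h1Q - (((N - c) / g : ℕ) : ℚ) * h2Q
  rw [key]
  field_simp

/-- The set of values of the natural character `χ_nat(σ) = 1 - #supp_{N_k}(σ)/N_k` on the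
inductive limit `S_n̂ = ⋃_k S_{N_k}` is exactly
`{p/q : q ∈ Div(n̂), 0 ≤ p ≤ q, gcd(p,q) = 1}`. -/
theorem chiNat_value_set (n : ℕ → ℕ) (hn : ∀ k, 1 < n k) :
    {r : ℚ | ∃ (k : ℕ) (σ : Equiv.Perm (Fin (Nprod n k))),
        r = 1 - (σ.support.card : ℚ) / (Nprod n k : ℚ)}
      = {r : ℚ | ∃ p q : ℕ, 0 < q ∧ (∃ k, q ∣ Nprod n k) ∧ p ≤ q ∧
          Nat.gcd p q = 1 ∧ r = (p : ℚ) / (q : ℚ)} := by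
  have hNpos : ∀ k, 0 < Nprod n k := fun k =>
    Finset.prod_pos (fun i _ => lt_trans one_pos (hn i))
  ext r
  simp only [Set.mem_setOf_eq]
  constructor
  · rintro ⟨k, σ, rfl⟩
    have hNpos' : 0 < Nprod n k := hNpos k
    have hc : σ.support.card ≤ Nprod n k := by
      calc σ.support.card ≤ Fintype.card (Fin (Nprod n k)) := Finset.card_le_univ _
        _ = Nprod n k := Fintype.card_fin _
    have hgpos : 0 < Nat.gcd (Nprod n k - σ.support.card) (Nprod n k) :=
      Nat.gcd_pos_of_pos_right _ hNpos'
    refine ⟨(Nprod n k - σ.support.card) / Nat.gcd (Nprod n k - σ.support.card) (Nprod n k),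
      Nprod n k / Nat.gcd (Nprod n k - σ.support.card) (Nprod n k),
      Nat.div_pos (Nat.le_of_dvd hNpos' (Nat.gcd_dvd_right _ _)) hgpos,
      ⟨k, Nat.div_dvd_of_dvd (Nat.gcd_dvd_right _ _)⟩,
      Nat.div_le_div_right (Nat.sub_le _ _),
      Nat.coprime_div_gcd_div_gcd hgpos,
      frac_reduce _ _ hNpos' hc⟩
  · rintro ⟨p, q, hq, ⟨k, hdvd⟩, hpq, hgcd, rfl⟩
    obtain ⟨t, ht⟩ := hdvd
    have htpos : 0 < t := by
      rcases Nat.eq_zero_or_pos t with rfl | h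
      · have := hNpos k; rw [ht] at this; simp at this
      · exact h
    have hnk := hn k
    have hN : Nprod n (k + 1) = q * (t * n k) := by
      show (∏ i ∈ Finset.range (k + 1), n i) = _
      rw [Finset.prod_range_succ]
      show Nprod n k * n k = _
      rw [ht, mul_assoc]
    have hcle : (q - p) * (t * n k) ≤ Nprod n (k + 1) := by
      rw [hN]; exact Nat.mul_le_mul_right _ (Nat.sub_le _ _)
    have hc1 : (q - p) * (t * n k) ≠ 1 := by
      rcases eq_or_lt_of_le hpq with h | h
      · rw [h]; simp
      · have h2 : 2 ≤ t * n k := by nlinarith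
        have h3 : 1 ≤ q - p := by omega
        nlinarith
    obtain ⟨σ, hσ⟩ := exists_perm_card_support _ _ hcle hc1
    refine ⟨k + 1, σ, ?_⟩
    rw [hσ, hN]
    have hqQ : (q : ℚ) ≠ 0 := Nat.cast_ne_zero.mpr hq.ne'
    push_cast [Nat.cast_sub hpq]
    have htQ : (t : ℚ) ≠ 0 := Nat.cast_ne_zero.mpr htpos.ne'
    have hnkQ : ((n k : ℕ) : ℚ) ≠ 0 := Nat.cast_ne_zero.mpr (by omega)
    field_simp
    ring
end
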